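/- arXiv:1312.3935 — 6 statements merged into one kernel-verified Lean document; each statement's English description precedes it below -/
import Mathlib

section
/- For the twisting function f_{O_{p,q}}, the symmetrization f_{O_{p,q}}(x,y) + f_{O_{p,q}}(y,x) equals α_{p,q}(x+y) + α_{p,q}(x) + α_{p,q}(y), for all x, y ∈ Z_2^n. -/
open Finset

/-- The cubic form `α_{p,q}` on `(ℤ/2)^n` (with `p` the number of "positive" generators). -/
def alphaF (p n : ℕ) (x : Fin n → ZMod 2) : ZMod 2 :=
  (∑ i : Fin n, ∑ j : Fin n, ∑ k : Fin n, if i < j ∧ j < k then x i * x j * x k else 0)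
  + (∑ i : Fin n, ∑ j : Fin n, if i < j then x i * x j else 0)
  + (∑ i : Fin n, x i)
  + (∑ i : Fin n, if (i : ℕ) < p then x i else 0)

/-- The twisting function `f_{O_{p,q}}` on `(ℤ/2)^n`. -/
def fO (p n : ℕ) (x y : Fin n → ZMod 2) : ZMod 2 :=
  (∑ i : Fin n, ∑ j : Fin n, ∑ k : Fin n,
      if i < j ∧ j < k then x i * x j * y k + x i * y j * x k + y i * x j * x k else 0)
  + (∑ i : Fin n, ∑ j : Fin n, if i ≤ j then x i * y j else 0)
  + (∑ i : Fin n, if (i : ℕ) < p then x i * y i else 0)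

lemma h2' : (2 : ZMod 2) = 0 := rfl

lemma cubic_aux (n : ℕ) (x y : Fin n → ZMod 2) :
    (∑ i : Fin n, ∑ j : Fin n, ∑ k : Fin n,
        if i < j ∧ j < k then x i * x j * y k + x i * y j * x k + y i * x j * x k else 0)
      + (∑ i : Fin n, ∑ j : Fin n, ∑ k : Fin n,
        if i < j ∧ j < k then y i * y j * x k + y i * x j * y k + x i * y j * y k else 0)
    = (∑ i : Fin n, ∑ j : Fin n, ∑ k : Fin n,
        if i < j ∧ j < k then (x i + y i) * (x j + y j) * (x k + y k) else 0)
      + (∑ i : Fin n, ∑ j : Fin n, ∑ k : Fin n,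
        if i < j ∧ j < k then x i * x j * x k else 0)
      + (∑ i : Fin n, ∑ j : Fin n, ∑ k : Fin n,
        if i < j ∧ j < k then y i * y j * y k else 0) := by
  simp only [← Finset.sum_add_distrib]
  refine Finset.sum_congr rfl fun i _ => Finset.sum_congr rfl fun j _ =>
    Finset.sum_congr rfl fun k _ => ?_
  split
  · linear_combination (-(x i * x j * x k + y i * y j * y k)) * h2'
  · simp

lemma quad_aux (n : ℕ) (x y : Fin n → ZMod 2) :
    (∑ i : Fin n, ∑ j : Fin n, if i ≤ j then x i * y j else 0)
      + (∑ i : Fin n, ∑ j : Fin n, if i ≤ j then y i * x j else 0)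
    = (∑ i : Fin n, ∑ j : Fin n, if i < j then (x i + y i) * (x j + y j) else 0)
      + (∑ i : Fin n, ∑ j : Fin n, if i < j then x i * x j else 0)
      + (∑ i : Fin n, ∑ j : Fin n, if i < j then y i * y j else 0) := by
  simp only [← Finset.sum_add_distrib]
  refine Finset.sum_congr rfl fun i _ => Finset.sum_congr rfl fun j _ => ?_
  rcases lt_trichotomy i j with h | h | h
  · simp only [if_pos h.le, if_pos h]
    linear_combination (-(x i * x j + y i * y j)) * h2'
  · subst h
    simp only [if_pos le_rfl, if_neg (lt_irrefl i), add_zero]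
    linear_combination (x i * y i) * h2'
  · simp only [if_neg (not_le.2 h), if_neg (asymm h), add_zero]

lemma p_aux (p n : ℕ) (x y : Fin n → ZMod 2) :
    (∑ i : Fin n, if (i : ℕ) < p then x i * y i else 0)
      + (∑ i : Fin n, if (i : ℕ) < p then y i * x i else 0) = 0 := by
  rw [← Finset.sum_add_distrib]
  refine Finset.sum_eq_zero fun i _ => ?_
  split
  · linear_combination (x i * y i) * h2'
  · simp

lemma lin_aux (n : ℕ) (x y : Fin n → ZMod 2) :
    (∑ i : Fin n, (x i + y i)) = (∑ i : Fin n, x i) + (∑ i : Fin n, y i) :=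
  Finset.sum_add_distrib

lemma plin_aux (p n : ℕ) (x y : Fin n → ZMod 2) :
    (∑ i : Fin n, if (i : ℕ) < p then x i + y i else 0)
    = (∑ i : Fin n, if (i : ℕ) < p then x i else 0)
      + (∑ i : Fin n, if (i : ℕ) < p then y i else 0) := by
  rw [← Finset.sum_add_distrib]
  exact Finset.sum_congr rfl fun i _ => by split <;> simp

/-- The symmetrization `f_{O_{p,q}}(x,y) + f_{O_{p,q}}(y,x)` equals
`α_{p,q}(x+y) + α_{p,q}(x) + α_{p,q}(y)`. -/
theorem stmt_6 (p q : ℕ) (x y : Fin (p + q) → ZMod 2) :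
    fO p (p + q) x y + fO p (p + q) y x
      = alphaF p (p + q) (x + y) + alphaF p (p + q) x + alphaF p (p + q) y := by
  simp only [fO, alphaF, Pi.add_apply]
  linear_combination cubic_aux (p + q) x y + quad_aux (p + q) x y + p_aux p (p + q) x y
    - lin_aux (p + q) x y - plin_aux p (p + q) x y
    - ((∑ i : Fin (p + q), x i) + (∑ i : Fin (p + q), y i)
       + (∑ i : Fin (p + q), if (i : ℕ) < p then x i else 0)
       + (∑ i : Fin (p + q), if (i : ℕ) < p then y i else 0)) * h2'
end

section
/- For the twisting function f_{O_{p,q}}, the associativity defect φ(x,y,z) := f(y,z) + f(x+y,z) + f(x,y+z) + f(x,y) equals the full polarization of α_{p,q}: φ(x,y,z) = α(x+y+z) + α(x+y) + α(x+z) + α(y+z) + α(x) + α(y) + α(z), for all x, y, z ∈ Z_2^n. -/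
open Finset

section Aux

variable {n : ℕ}

private def T3 (n : ℕ) (x y : Fin n → ZMod 2) : ZMod 2 :=
  ∑ i : Fin n, ∑ j : Fin n, ∑ k : Fin n,
      if i < j ∧ j < k then x i * x j * y k + x i * y j * x k + y i * x j * x k else 0

private def C3 (n : ℕ) (x : Fin n → ZMod 2) : ZMod 2 :=
  ∑ i : Fin n, ∑ j : Fin n, ∑ k : Fin n, if i < j ∧ j < k then x i * x j * x k else 0

private lemma cub9 (a b c d e f g h i : ZMod 2) :
    (d*e*i + d*h*f + g*e*f) + ((a+d)*(b+e)*i + (a+d)*h*(c+f) + g*(b+e)*(c+f))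
      + (a*b*(f+i) + a*(e+h)*c + (d+g)*b*c) + (a*b*f + a*e*c + d*b*c)
    = (a+d+g)*(b+e+h)*(c+f+i) + (a+d)*(b+e)*(c+f) + (a+g)*(b+h)*(c+i)
      + (d+g)*(e+h)*(f+i) + a*b*c + d*e*f + g*h*i := by revert a b c d e f g h i; decide

private lemma T3lem (x y z : Fin n → ZMod 2) :
    T3 n y z + T3 n (x+y) z + T3 n x (y+z) + T3 n x y
      = C3 n (x+y+z) + C3 n (x+y) + C3 n (x+z) + C3 n (y+z) + C3 n x + C3 n y + C3 n z := by
  simp only [T3, C3, ← Finset.sum_add_distrib]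
  refine Finset.sum_congr rfl fun i _ => Finset.sum_congr rfl fun j _ =>
    Finset.sum_congr rfl fun k _ => ?_
  split_ifs
  · simp only [Pi.add_apply]
    exact cub9 (x i) (x j) (x k) (y i) (y j) (y k) (z i) (z j) (z k)
  · simp

private lemma quad6 (a b d e g h : ZMod 2) :
    d*h + (a+d)*h + a*(e+h) + a*e = 0 := by revert a b d e g h; decide

private lemma Q2lem (x y z : Fin n → ZMod 2) :
    (∑ i : Fin n, ∑ j : Fin n, if i ≤ j then y i * z j else 0)
    + (∑ i : Fin n, ∑ j : Fin n, if i ≤ j then (x+y) i * z j else 0)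
    + (∑ i : Fin n, ∑ j : Fin n, if i ≤ j then x i * (y+z) j else 0)
    + (∑ i : Fin n, ∑ j : Fin n, if i ≤ j then x i * y j else 0) = 0 := by
  simp only [← Finset.sum_add_distrib]
  refine Finset.sum_eq_zero fun i _ => Finset.sum_eq_zero fun j _ => ?_
  split_ifs
  · simp only [Pi.add_apply]
    exact quad6 (x i) (x j) (y i) (y j) (z i) (z j)
  · simp

private lemma Plem (p : ℕ) (x y z : Fin n → ZMod 2) :
    (∑ i : Fin n, if (i : ℕ) < p then y i * z i else 0)
    + (∑ i : Fin n, if (i : ℕ) < p then (x+y) i * z i else 0)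
    + (∑ i : Fin n, if (i : ℕ) < p then x i * (y+z) i else 0)
    + (∑ i : Fin n, if (i : ℕ) < p then x i * y i else 0) = 0 := by
  simp only [← Finset.sum_add_distrib]
  refine Finset.sum_eq_zero fun i _ => ?_
  split_ifs
  · simp only [Pi.add_apply]
    exact quad6 (x i) (x i) (y i) (y i) (z i) (z i)
  · simp

private lemma sev6 (a d g : ZMod 2) (b e h : ZMod 2) :
    (a+d+g)*(b+e+h) + (a+d)*(b+e) + (a+g)*(b+h) + (d+g)*(e+h) + a*b + d*e + g*h = 0 := by revert a b e d g h; decide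

private lemma alphaQlem (x y z : Fin n → ZMod 2) :
    (∑ i : Fin n, ∑ j : Fin n, if i < j then (x+y+z) i * (x+y+z) j else 0)
    + (∑ i : Fin n, ∑ j : Fin n, if i < j then (x+y) i * (x+y) j else 0)
    + (∑ i : Fin n, ∑ j : Fin n, if i < j then (x+z) i * (x+z) j else 0)
    + (∑ i : Fin n, ∑ j : Fin n, if i < j then (y+z) i * (y+z) j else 0)
    + (∑ i : Fin n, ∑ j : Fin n, if i < j then x i * x j else 0)
    + (∑ i : Fin n, ∑ j : Fin n, if i < j then y i * y j else 0)
    + (∑ i : Fin n, ∑ j : Fin n, if i < j then z i * z j else 0) = 0 := by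
  simp only [← Finset.sum_add_distrib]
  refine Finset.sum_eq_zero fun i _ => Finset.sum_eq_zero fun j _ => ?_
  split_ifs
  · simp only [Pi.add_apply]
    exact sev6 (x i) (y i) (z i) (x j) (y j) (z j)
  · simp

private lemma lin7 (a d g : ZMod 2) : (a+d+g) + (a+d) + (a+g) + (d+g) + a + d + g = 0 := by revert a d g; decide

private lemma alphaL1lem (x y z : Fin n → ZMod 2) :
    (∑ i : Fin n, (x+y+z) i) + (∑ i : Fin n, (x+y) i) + (∑ i : Fin n, (x+z) i)
    + (∑ i : Fin n, (y+z) i) + (∑ i : Fin n, x i) + (∑ i : Fin n, y i)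
    + (∑ i : Fin n, z i) = 0 := by
  simp only [← Finset.sum_add_distrib]
  refine Finset.sum_eq_zero fun i _ => ?_
  simp only [Pi.add_apply]
  exact lin7 (x i) (y i) (z i)

private lemma alphaLplem (p : ℕ) (x y z : Fin n → ZMod 2) :
    (∑ i : Fin n, if (i : ℕ) < p then (x+y+z) i else 0)
    + (∑ i : Fin n, if (i : ℕ) < p then (x+y) i else 0)
    + (∑ i : Fin n, if (i : ℕ) < p then (x+z) i else 0)
    + (∑ i : Fin n, if (i : ℕ) < p then (y+z) i else 0)
    + (∑ i : Fin n, if (i : ℕ) < p then x i else 0)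
    + (∑ i : Fin n, if (i : ℕ) < p then y i else 0)
    + (∑ i : Fin n, if (i : ℕ) < p then z i else 0) = 0 := by
  simp only [← Finset.sum_add_distrib]
  refine Finset.sum_eq_zero fun i _ => ?_
  split_ifs
  · simp only [Pi.add_apply]
    exact lin7 (x i) (y i) (z i)
  · simp

end Aux

/-- The associativity defect `φ(x,y,z) = f(y,z) + f(x+y,z) + f(x,y+z) + f(x,y)` of
`f = f_{O_{p,q}}` equals the full polarization of `α = α_{p,q}`. -/
theorem stmt_7 (p q : ℕ) (x y z : Fin (p + q) → ZMod 2) :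
    fO p (p + q) y z + fO p (p + q) (x + y) z + fO p (p + q) x (y + z) + fO p (p + q) x y
      = alphaF p (p + q) (x + y + z) + alphaF p (p + q) (x + y) + alphaF p (p + q) (x + z)
        + alphaF p (p + q) (y + z) + alphaF p (p + q) x + alphaF p (p + q) y
        + alphaF p (p + q) z := by
  have h1 := T3lem x y z
  simp only [T3, C3] at h1
  simp only [fO, alphaF]
  linear_combination h1 + Q2lem x y z + Plem p x y z - alphaQlem x y z
    - alphaL1lem x y z - alphaLplem p x y z
end

section
/- The associativity defect φ of the twisting function f_{O_{p,q}} is tri-additive in its arguments: φ(x+x', y, z) = φ(x,y,z) + φ(x',y,z), and similarly in the other two arguments; moreover φ(e_i, e_j, e_k) = 1 for pairwise distinct i, j, k. -/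
open Finset

/-- The associativity defect `φ` of `f_{O_{p,q}}`. -/
def phiO (p n : ℕ) (x y z : Fin n → ZMod 2) : ZMod 2 :=
  fO p n y z + fO p n (x + y) z + fO p n x (y + z) + fO p n x y

def Cc (n : ℕ) (x y : Fin n → ZMod 2) : ZMod 2 :=
  ∑ i : Fin n, ∑ j : Fin n, ∑ k : Fin n,
      if i < j ∧ j < k then x i * x j * y k + x i * y j * x k + y i * x j * x k else 0

def Bb (n : ℕ) (x y : Fin n → ZMod 2) : ZMod 2 :=
  ∑ i : Fin n, ∑ j : Fin n, if i ≤ j then x i * y j else 0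

def Dd (p n : ℕ) (x y : Fin n → ZMod 2) : ZMod 2 :=
  ∑ i : Fin n, if (i : ℕ) < p then x i * y i else 0

lemma fO_split (p n : ℕ) (x y : Fin n → ZMod 2) :
    fO p n x y = Cc n x y + Bb n x y + Dd p n x y := rfl

def phiS (n : ℕ) (x y z : Fin n → ZMod 2) : ZMod 2 :=
  ∑ i : Fin n, ∑ j : Fin n, ∑ k : Fin n, if i < j ∧ j < k then
    x i * y j * z k + x i * z j * y k + y i * x j * z k
      + y i * z j * x k + z i * x j * y k + z i * y j * x k else 0

lemma key_cubic : ∀ x1 x2 x3 y1 y2 y3 z1 z2 z3 : ZMod 2,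
    (y1*y2*z3 + y1*z2*y3 + z1*y2*y3)
      + ((x1+y1)*(x2+y2)*z3 + (x1+y1)*z2*(x3+y3) + z1*(x2+y2)*(x3+y3))
      + (x1*x2*(y3+z3) + x1*(y2+z2)*x3 + (y1+z1)*x2*x3)
      + (x1*x2*y3 + x1*y2*x3 + y1*x2*x3)
    = x1*y2*z3 + x1*z2*y3 + y1*x2*z3 + y1*z2*x3 + z1*x2*y3 + z1*y2*x3 := by decide

lemma key_bil : ∀ xi yi yj zj : ZMod 2,
    yi*zj + (xi+yi)*zj + xi*(yj+zj) + xi*yj = 0 := by decide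

lemma key_diag : ∀ xi yi zi : ZMod 2,
    yi*zi + (xi+yi)*zi + xi*(yi+zi) + xi*yi = 0 := by decide

lemma cubic_part (n : ℕ) (x y z : Fin n → ZMod 2) :
    Cc n y z + Cc n (x+y) z + Cc n x (y+z) + Cc n x y = phiS n x y z := by
  unfold Cc phiS
  simp only [← Finset.sum_add_distrib, Pi.add_apply]
  refine Finset.sum_congr rfl fun i _ => Finset.sum_congr rfl fun j _ =>
    Finset.sum_congr rfl fun k _ => ?_
  split_ifs with h
  · linear_combination key_cubic (x i) (x j) (x k) (y i) (y j) (y k) (z i) (z j) (z k)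
  · simp

lemma bil_part (n : ℕ) (x y z : Fin n → ZMod 2) :
    Bb n y z + Bb n (x+y) z + Bb n x (y+z) + Bb n x y = 0 := by
  unfold Bb
  simp only [← Finset.sum_add_distrib, Pi.add_apply]
  refine Finset.sum_eq_zero fun i _ => Finset.sum_eq_zero fun j _ => ?_
  split_ifs with h
  · linear_combination key_bil (x i) (y i) (y j) (z j)
  · rfl

lemma diag_part (p n : ℕ) (x y z : Fin n → ZMod 2) :
    Dd p n y z + Dd p n (x+y) z + Dd p n x (y+z) + Dd p n x y = 0 := by
  unfold Dd
  simp only [← Finset.sum_add_distrib, Pi.add_apply]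
  refine Finset.sum_eq_zero fun i _ => ?_
  split_ifs with h
  · linear_combination key_diag (x i) (y i) (z i)
  · rfl

lemma phiO_eq (p n : ℕ) (x y z : Fin n → ZMod 2) :
    phiO p n x y z = phiS n x y z := by
  have h1 := cubic_part n x y z
  have h2 := bil_part n x y z
  have h3 := diag_part p n x y z
  unfold phiO
  rw [fO_split, fO_split, fO_split, fO_split]
  linear_combination h1 + h2 + h3

lemma phiS_swapA (n : ℕ) (x y z : Fin n → ZMod 2) : phiS n x y z = phiS n y x z := by
  unfold phiS
  refine Finset.sum_congr rfl fun i _ => Finset.sum_congr rfl fun j _ =>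
    Finset.sum_congr rfl fun k _ => ?_
  split_ifs with h
  · ring
  · rfl

lemma phiS_swapB (n : ℕ) (x y z : Fin n → ZMod 2) : phiS n x y z = phiS n x z y := by
  unfold phiS
  refine Finset.sum_congr rfl fun i _ => Finset.sum_congr rfl fun j _ =>
    Finset.sum_congr rfl fun k _ => ?_
  split_ifs with h
  · ring
  · rfl

lemma phiS_sorted (n : ℕ) (i j k : Fin n) (hij : i < j) (hjk : j < k) :
    phiS n (Pi.single i 1) (Pi.single j 1) (Pi.single k 1) = 1 := by
  unfold phiS
  have key : ∀ a b c : Fin n, (if a < b ∧ b < c then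
      (Pi.single i 1 : Fin n → ZMod 2) a * (Pi.single j 1 : Fin n → ZMod 2) b * (Pi.single k 1 : Fin n → ZMod 2) c
      + (Pi.single i 1 : Fin n → ZMod 2) a * (Pi.single k 1 : Fin n → ZMod 2) b * (Pi.single j 1 : Fin n → ZMod 2) c
      + (Pi.single j 1 : Fin n → ZMod 2) a * (Pi.single i 1 : Fin n → ZMod 2) b * (Pi.single k 1 : Fin n → ZMod 2) c
      + (Pi.single j 1 : Fin n → ZMod 2) a * (Pi.single k 1 : Fin n → ZMod 2) b * (Pi.single i 1 : Fin n → ZMod 2) c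
      + (Pi.single k 1 : Fin n → ZMod 2) a * (Pi.single i 1 : Fin n → ZMod 2) b * (Pi.single j 1 : Fin n → ZMod 2) c
      + (Pi.single k 1 : Fin n → ZMod 2) a * (Pi.single j 1 : Fin n → ZMod 2) b * (Pi.single i 1 : Fin n → ZMod 2) c
      else 0)
      = (if c = k then (if b = j then (if a = i then (1:ZMod 2) else 0) else 0) else 0) := by
    intro a b c
    have hij' : (i:ℕ) < j := hij
    have hjk' : (j:ℕ) < k := hjk
    simp only [Pi.single_apply, Fin.lt_def, Fin.ext_iff]
    split_ifs <;> first | rfl | decide | omega | (exfalso; omega)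
  simp only [key]
  simp [Finset.sum_ite_eq']

/-- The associativity defect `φ` of `f_{O_{p,q}}` is tri-additive, and takes the
value `1` on triples of pairwise distinct standard basis vectors. -/
theorem stmt_8 (p q : ℕ) (h : 3 ≤ p + q) :
    (∀ x x' y z : Fin (p + q) → ZMod 2,
        phiO p (p + q) (x + x') y z = phiO p (p + q) x y z + phiO p (p + q) x' y z) ∧
    (∀ x y y' z : Fin (p + q) → ZMod 2,
        phiO p (p + q) x (y + y') z = phiO p (p + q) x y z + phiO p (p + q) x y' z) ∧
    (∀ x y z z' : Fin (p + q) → ZMod 2,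
        phiO p (p + q) x y (z + z') = phiO p (p + q) x y z + phiO p (p + q) x y z') ∧
    (∀ i j k : Fin (p + q), i ≠ j → j ≠ k → i ≠ k →
        phiO p (p + q) (Pi.single i 1) (Pi.single j 1) (Pi.single k 1) = 1) := by
  set n := p + q
  refine ⟨?_, ?_, ?_, ?_⟩
  · intro x x' y z
    rw [phiO_eq, phiO_eq, phiO_eq]
    unfold phiS
    simp only [← Finset.sum_add_distrib, Pi.add_apply]
    refine Finset.sum_congr rfl fun i _ => Finset.sum_congr rfl fun j _ =>
      Finset.sum_congr rfl fun k _ => ?_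
    split_ifs with hc
    · ring
    · simp
  · intro x y y' z
    rw [phiO_eq, phiO_eq, phiO_eq]
    unfold phiS
    simp only [← Finset.sum_add_distrib, Pi.add_apply]
    refine Finset.sum_congr rfl fun i _ => Finset.sum_congr rfl fun j _ =>
      Finset.sum_congr rfl fun k _ => ?_
    split_ifs with hc
    · ring
    · simp
  · intro x y z z'
    rw [phiO_eq, phiO_eq, phiO_eq]
    unfold phiS
    simp only [← Finset.sum_add_distrib, Pi.add_apply]
    refine Finset.sum_congr rfl fun i _ => Finset.sum_congr rfl fun j _ =>
      Finset.sum_congr rfl fun k _ => ?_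
    split_ifs with hc
    · ring
    · simp
  · intro i j k hij hjk hik
    rw [phiO_eq]
    rcases lt_trichotomy i j with h1 | h1 | h1
    · rcases lt_trichotomy j k with h2 | h2 | h2
      · exact phiS_sorted n i j k h1 h2
      · exact absurd h2 hjk
      · rcases lt_trichotomy i k with h3 | h3 | h3
        · rw [phiS_swapB]
          exact phiS_sorted n i k j h3 h2
        · exact absurd h3 hik
        · rw [phiS_swapB, phiS_swapA]
          exact phiS_sorted n k i j h3 h1
    · exact absurd h1 hij
    · rcases lt_trichotomy i k with h3 | h3 | h3
      · rw [phiS_swapA]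
        exact phiS_sorted n j i k h1 h3
      · exact absurd h3 hik
      · rcases lt_trichotomy j k with h2 | h2 | h2
        · rw [phiS_swapA, phiS_swapB]
          exact phiS_sorted n j k i h2 h3
        · exact absurd h2 hjk
        · rw [phiS_swapA, phiS_swapB, phiS_swapA]
          exact phiS_sorted n k j i h2 h1
end

section
/- Define s(p,q) = #{x ∈ Z_2^n : α_{p,q}(x) = 1} with n = p+q. Then s(n,0) = Σ_{i : 4i+2 ≤ n} C(n, 4i+2) and s(0,n) = 2^n − Σ_{i : 4i ≤ n} C(n, 4i). -/
open Finset

/-- The statistics `s(p,q) = #{x : α_{p,q}(x) = 1}`. -/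
def statS (p q : ℕ) : ℕ :=
  (Finset.univ.filter (fun x : Fin (p + q) → ZMod 2 => alphaF p (p + q) x = 1)).card

lemma choose2_add (v : ℕ) : (v+4).choose 2 = v.choose 2 + (4*v+6) := by
  simp [Nat.choose_succ_succ, Nat.choose_one_right]; ring

lemma choose3_add (v : ℕ) : (v+4).choose 3 = v.choose 3 + 4 * v.choose 2 + (6*v+4) := by
  simp [Nat.choose_succ_succ, Nat.choose_one_right]; ring

lemma parity23 (w : ℕ) : (w.choose 3 + w.choose 2) % 2 = if w % 4 = 2 then 1 else 0 := by
  induction w using Nat.strong_induction_on with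
  | _ w ih =>
    rcases Nat.lt_or_ge w 4 with h | h
    · interval_cases w <;> decide
    · obtain ⟨v, rfl⟩ : ∃ v, w = v + 4 := ⟨w - 4, by omega⟩
      have h1 := choose2_add v
      have h2 := choose3_add v
      have h3 := ih v (by omega)
      split_ifs at h3 ⊢ <;> omega

lemma P_card {n : ℕ} (S : Finset (Fin n)) :
    (∑ i ∈ S, ∑ j ∈ S, if i < j then 1 else 0) = S.card.choose 2 := by
  induction S using Finset.induction_on with
  | empty => simp
  | @insert a S ha ih =>
    simp only [Finset.sum_insert ha, Finset.sum_add_distrib, lt_irrefl, if_false]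
    have h1 : (∑ j ∈ S, if a < j then 1 else 0) = (S.filter (fun j => a < j)).card := by
      simp [Finset.sum_boole]
    have h2 : (∑ i ∈ S, if i < a then 1 else 0) = (S.filter (fun i => i < a)).card := by
      simp [Finset.sum_boole]
    have h3 := Finset.card_filter_add_card_filter_not (s := S) (p := fun j => a < j)
    have h4 : S.filter (fun i => ¬ a < i) = S.filter (fun i => i < a) := by
      apply Finset.filter_congr
      intro i hi
      have hne : i ≠ a := fun h => ha (h ▸ hi)
      simp only [not_lt, eq_iff_iff]
      exact ⟨fun h => lt_of_le_of_ne h hne, le_of_lt⟩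
    rw [Finset.card_insert_of_notMem ha, Nat.choose_succ_succ, Nat.choose_one_right]
    rw [h4] at h3
    have h5 : (S.card).choose (Nat.succ 1) = (S.card).choose 2 := rfl
    omega

lemma T_card {n : ℕ} (S : Finset (Fin n)) :
    (∑ i ∈ S, ∑ j ∈ S, ∑ k ∈ S, if i < j ∧ j < k then 1 else 0) = S.card.choose 3 := by
  induction S using Finset.induction_on with
  | empty => simp
  | @insert a S ha ih =>
    simp only [Finset.sum_insert ha, Finset.sum_add_distrib, lt_irrefl, and_false, false_and,
      if_false, Finset.sum_const_zero, zero_add, add_zero]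
    have key : (∑ j ∈ S, ∑ k ∈ S, if a < j ∧ j < k then 1 else 0)
        + ((∑ i ∈ S, ∑ k ∈ S, if i < a ∧ a < k then 1 else 0)
          + (∑ i ∈ S, ∑ j ∈ S, if i < j ∧ j < a then 1 else 0))
        = ∑ i ∈ S, ∑ j ∈ S, if i < j then 1 else 0 := by
      rw [← Finset.sum_add_distrib, ← Finset.sum_add_distrib]
      apply Finset.sum_congr rfl
      intro u hu
      rw [← Finset.sum_add_distrib, ← Finset.sum_add_distrib]
      apply Finset.sum_congr rfl
      intro v hv
      have hu' : u ≠ a := fun h => ha (h ▸ hu)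
      have hv' : v ≠ a := fun h => ha (h ▸ hv)
      have h1 : (u : ℕ) ≠ a := fun h => hu' (Fin.ext h)
      have h2 : (v : ℕ) ≠ a := fun h => hv' (Fin.ext h)
      simp only [Fin.lt_def]
      split_ifs <;> omega
    have hz : (∑ x ∈ S, if a < x ∧ x < a then 1 else 0) = 0 := by
      apply Finset.sum_eq_zero; intro x _
      have : ¬ (a < x ∧ x < a) := fun h => lt_irrefl a (h.1.trans h.2)
      simp [this]
    rw [P_card] at key
    rw [Finset.card_insert_of_notMem ha, Nat.choose_succ_succ]
    have h5 : (S.card).choose (Nat.succ 2) = (S.card).choose 3 := rfl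
    omega

lemma zmod2_cases (a : ZMod 2) : a = 0 ∨ a = 1 := by revert a; decide

lemma alphaF_eq (p n : ℕ) (x : Fin n → ZMod 2) :
    alphaF p n x =
      (((univ.filter fun i => x i = 1).card.choose 3
        + (univ.filter fun i => x i = 1).card.choose 2
        + (univ.filter fun i => x i = 1).card
        + ((univ.filter fun i => x i = 1).filter fun i : Fin n => (i : ℕ) < p).card : ℕ)
        : ZMod 2) := by
  set S := univ.filter fun i => x i = 1 with hS
  have hmem : ∀ i ∈ S, x i = 1 := by intro i hi; exact (Finset.mem_filter.mp hi).2
  have hnot : ∀ i : Fin n, i ∉ S → x i = 0 := by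
    intro i hi
    rcases zmod2_cases (x i) with h | h
    · exact h
    · exact absurd (Finset.mem_filter.mpr ⟨Finset.mem_univ i, h⟩) hi
  have t1 : (∑ i : Fin n, ∑ j : Fin n, ∑ k : Fin n,
        if i < j ∧ j < k then x i * x j * x k else 0)
      = ((S.card.choose 3 : ℕ) : ZMod 2) := by
    rw [← T_card S]
    push_cast
    rw [← Finset.sum_subset (Finset.subset_univ S) (fun i _ hi => by simp [hnot i hi])]
    apply Finset.sum_congr rfl; intro i hi
    rw [← Finset.sum_subset (Finset.subset_univ S) (fun j _ hj => by simp [hnot j hj])]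
    apply Finset.sum_congr rfl; intro j hj
    rw [← Finset.sum_subset (Finset.subset_univ S) (fun k _ hk => by simp [hnot k hk])]
    apply Finset.sum_congr rfl; intro k hk
    simp [hmem i hi, hmem j hj, hmem k hk]
  have t2 : (∑ i : Fin n, ∑ j : Fin n, if i < j then x i * x j else 0)
      = ((S.card.choose 2 : ℕ) : ZMod 2) := by
    rw [← P_card S]
    push_cast
    rw [← Finset.sum_subset (Finset.subset_univ S) (fun i _ hi => by simp [hnot i hi])]
    apply Finset.sum_congr rfl; intro i hi
    rw [← Finset.sum_subset (Finset.subset_univ S) (fun j _ hj => by simp [hnot j hj])]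
    apply Finset.sum_congr rfl; intro j hj
    simp [hmem i hi, hmem j hj]
  have t3 : (∑ i : Fin n, x i) = ((S.card : ℕ) : ZMod 2) := by
    rw [← Finset.sum_subset (Finset.subset_univ S) (fun i _ hi => hnot i hi)]
    rw [Finset.sum_congr rfl hmem]
    simp
  have t4 : (∑ i : Fin n, if (i : ℕ) < p then x i else 0)
      = (((S.filter fun i : Fin n => (i : ℕ) < p).card : ℕ) : ZMod 2) := by
    have hc : ∀ i ∈ S, (if (i : ℕ) < p then x i else 0) = (if (i : ℕ) < p then 1 else 0) := by
      intro i hi; rw [hmem i hi]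
    rw [← Finset.sum_subset (Finset.subset_univ S) (fun i _ hi => by simp [hnot i hi])]
    rw [Finset.sum_congr rfl hc, ← Finset.sum_filter]
    simp
  rw [alphaF, t1, t2, t3, t4]
  push_cast
  ring

lemma card_filter_eq (n : ℕ) (g : Finset (Fin n) → Prop) [DecidablePred g] :
    (univ.filter fun x : Fin n → ZMod 2 => g (univ.filter fun i => x i = 1)).card
      = (univ.filter g).card := by
  apply Finset.card_nbij' (i := fun x => univ.filter fun i => x i = 1)
    (j := fun S => fun i => if i ∈ S then (1 : ZMod 2) else 0)
  · intro x hx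
    simpa using (Finset.mem_filter.mp hx).2
  · intro S hS
    simp only [Finset.mem_coe, Finset.mem_filter, Finset.mem_univ, true_and]
    convert (Finset.mem_filter.mp hS).2 using 2
    ext i
    simp only [Finset.mem_filter, Finset.mem_univ, true_and]
    by_cases h : i ∈ S <;> simp [h]
  · intro x hx
    funext i
    rcases zmod2_cases (x i) with h | h
    · rw [h]
      have : i ∉ univ.filter fun j => x j = 1 := by simp [h]
      simp [this]
    · rw [h]
      have : i ∈ univ.filter fun j => x j = 1 := by simp [h]
      simp [this]
  · intro S hS
    simp only
    ext i
    simp only [Finset.mem_filter, Finset.mem_univ, true_and]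
    by_cases h : i ∈ S <;> simp [h]

lemma count_card (n : ℕ) (f : ℕ → Prop) [DecidablePred f] :
    (univ.filter fun S : Finset (Fin n) => f S.card).card
      = ∑ w ∈ (range (n+1)).filter f, n.choose w := by
  rw [Finset.card_eq_sum_card_fiberwise
    (f := fun S : Finset (Fin n) => S.card) (t := (range (n+1)).filter f)]
  · apply Finset.sum_congr rfl
    intro w hw
    have hfw : f w := (Finset.mem_filter.mp hw).2
    have h1 : (univ.filter fun S : Finset (Fin n) => f S.card).filter
        (fun S => S.card = w) = univ.filter fun S : Finset (Fin n) => S.card = w := by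
      ext S
      simp only [Finset.mem_filter, Finset.mem_univ, true_and]
      constructor
      · exact fun h => h.2
      · intro h; exact ⟨h ▸ hfw, h⟩
    rw [h1]
    have h2 : (univ.filter fun S : Finset (Fin n) => S.card = w)
        = Finset.powersetCard w (univ : Finset (Fin n)) := by
      rw [Finset.powersetCard_eq_filter, Finset.powerset_univ]
    rw [h2, Finset.card_powersetCard, Finset.card_univ, Fintype.card_fin]
  · intro S hS
    simp only [Finset.mem_coe, Finset.mem_filter, Finset.mem_range]
    refine ⟨?_, (Finset.mem_filter.mp hS).2⟩
    have := Finset.card_le_univ S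
    simp only [Finset.card_univ, Fintype.card_fin] at this
    omega


lemma statS_left_aux (n : ℕ) :
    (univ.filter fun x : Fin n → ZMod 2 => alphaF n n x = 1).card
      = ∑ w ∈ (range (n+1)).filter (fun w => w % 4 = 2), n.choose w := by
  have e0 : (univ.filter fun x : Fin n → ZMod 2 => alphaF n n x = 1)
      = univ.filter fun x : Fin n → ZMod 2 =>
        ((fun S : Finset (Fin n) => S.card % 4 = 2) (univ.filter fun i => x i = 1)) := by
    apply Finset.filter_congr
    intro x _
    rw [alphaF_eq n n x]
    set S := univ.filter fun i => x i = 1 with hS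
    have hfull : (S.filter fun i : Fin n => (i : ℕ) < n) = S := by
      apply Finset.filter_true_of_mem
      intro i _
      exact i.isLt
    rw [hfull]
    rw [show (1 : ZMod 2) = ((1 : ℕ) : ZMod 2) by norm_num,
      ZMod.natCast_eq_natCast_iff, Nat.ModEq]
    show _ ↔ S.card % 4 = 2
    have hp := parity23 S.card
    split_ifs at hp <;> omega
  rw [e0, card_filter_eq n (fun S => S.card % 4 = 2),
    count_card n (fun w => w % 4 = 2)]

lemma statS_right_aux (n : ℕ) :
    (univ.filter fun x : Fin n → ZMod 2 => alphaF 0 n x = 1).card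
      = ∑ w ∈ (range (n+1)).filter (fun w => ¬ w % 4 = 0), n.choose w := by
  have e0 : (univ.filter fun x : Fin n → ZMod 2 => alphaF 0 n x = 1)
      = univ.filter fun x : Fin n → ZMod 2 =>
        ((fun S : Finset (Fin n) => ¬ S.card % 4 = 0) (univ.filter fun i => x i = 1)) := by
    apply Finset.filter_congr
    intro x _
    rw [alphaF_eq 0 n x]
    set S := univ.filter fun i => x i = 1 with hS
    have hempty : (S.filter fun i : Fin n => (i : ℕ) < 0) = ∅ := by
      apply Finset.filter_false_of_mem
      intro i _
      omega
    rw [hempty]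
    rw [show (1 : ZMod 2) = ((1 : ℕ) : ZMod 2) by norm_num,
      ZMod.natCast_eq_natCast_iff, Nat.ModEq]
    show _ ↔ ¬ S.card % 4 = 0
    have hp := parity23 S.card
    simp only [Finset.card_empty]
    split_ifs at hp <;> omega
  rw [e0, card_filter_eq n (fun S => ¬ S.card % 4 = 0),
    count_card n (fun w => ¬ w % 4 = 0)]

/-- `s(n,0) = Σ_{4i+2 ≤ n} C(n,4i+2)` and `s(0,n) = 2^n − Σ_{4i ≤ n} C(n,4i)`. -/
theorem stmt_11 (n : ℕ) :
    statS n 0 = ∑ i ∈ (Finset.range (n + 1)).filter (fun i => 4 * i + 2 ≤ n),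
        n.choose (4 * i + 2) ∧
    statS 0 n = 2 ^ n - ∑ i ∈ (Finset.range (n + 1)).filter (fun i => 4 * i ≤ n),
        n.choose (4 * i) := by
  constructor
  · have e1 : statS n 0 = ∑ w ∈ (range (n+1)).filter (fun w => w % 4 = 2), n.choose w :=
      statS_left_aux n
    rw [e1]
    refine Finset.sum_nbij' (i := fun w => (w - 2) / 4) (j := fun i => 4 * i + 2)
      ?_ ?_ ?_ ?_ ?_
    · intro w hw
      simp only [Finset.mem_filter, Finset.mem_range]  at hw ⊢
      try beta_reduce
      omega
    · intro i hi
      simp only [Finset.mem_filter, Finset.mem_range] at hi ⊢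
      try beta_reduce
      omega
    · intro w hw
      simp only [Finset.mem_filter, Finset.mem_range] at hw
      try beta_reduce
      omega
    · intro i hi
      simp only [Finset.mem_filter, Finset.mem_range] at hi
      try beta_reduce
      omega
    · intro w hw
      simp only [Finset.mem_filter, Finset.mem_range] at hw
      congr 1
      try beta_reduce
      omega
  · have e1 : statS 0 n
        = ∑ w ∈ (range ((0+n)+1)).filter (fun w => ¬ w % 4 = 0), (0+n).choose w :=
      statS_right_aux (0 + n)
    simp only [Nat.zero_add] at e1
    rw [e1]
    have hsplit := Finset.sum_filter_add_sum_filter_not (range (n+1))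
      (fun w => w % 4 = 0) (fun w => n.choose w)
    have htot : ∑ w ∈ range (n+1), n.choose w = 2 ^ n := Nat.sum_range_choose n
    have hre : ∑ i ∈ (Finset.range (n + 1)).filter (fun i => 4 * i ≤ n), n.choose (4 * i)
        = ∑ w ∈ (range (n+1)).filter (fun w => w % 4 = 0), n.choose w := by
      refine Finset.sum_nbij' (i := fun i => 4 * i) (j := fun w => w / 4) ?_ ?_ ?_ ?_ ?_
      · intro i hi
        simp only [Finset.mem_filter, Finset.mem_range] at hi ⊢
        try beta_reduce
        omega
      · intro w hw
        simp only [Finset.mem_filter, Finset.mem_range] at hw ⊢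
        try beta_reduce
        omega
      · intro i hi
        simp only [Finset.mem_filter, Finset.mem_range] at hi
        try beta_reduce
        omega
      · intro w hw
        simp only [Finset.mem_filter, Finset.mem_range] at hw
        try beta_reduce
        omega
      · intro i hi
        rfl
    rw [hre]
    omega
end

section
/- The value α_{p,q}(x) of the cubic form depends only on the Hamming weight a of the first p coordinates of x and the Hamming weight b of the last q coordinates: α_{p,q}(x) = [a+b ≢ 0 mod 4] + a mod 2, computed in Z/2Z. -/
open Finset

private lemma tri3 {n : ℕ} (i j : Fin n) :
    (if i < j then (1:ℕ) else 0) + (if j < i then 1 else 0) + (if i = j then 1 else 0) = 1 := by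
  rcases lt_trichotomy i j with h|h|h
  · simp [h, lt_asymm h, h.ne]
  · simp [h]
  · simp [h, lt_asymm h, h.ne']

private lemma pairs_nat {n : ℕ} (S : Finset (Fin n)) :
    (∑ i ∈ S, ∑ j ∈ S, if i < j then (1:ℕ) else 0) = S.card.choose 2 := by
  have hsym : (∑ i ∈ S, ∑ j ∈ S, if i < j then (1:ℕ) else 0)
      = ∑ i ∈ S, ∑ j ∈ S, if j < i then (1:ℕ) else 0 := Finset.sum_comm
  have hdiag : (∑ i ∈ S, ∑ j ∈ S, if i = j then (1:ℕ) else 0) = S.card := by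
    have h1 : ∀ i ∈ S, (∑ j ∈ S, if i = j then (1:ℕ) else 0) = 1 := fun i hi => by
      rw [Finset.sum_ite_eq S i (fun _ => (1:ℕ))]; simp [hi]
    rw [Finset.sum_congr rfl h1, Finset.sum_const, smul_eq_mul, mul_one]
  have htot : (∑ i ∈ S, ∑ j ∈ S, ((if i < j then (1:ℕ) else 0) + (if j < i then 1 else 0)
      + (if i = j then 1 else 0))) = S.card * S.card := by
    simp only [tri3]
    simp [Finset.sum_const, smul_eq_mul]
  simp only [Finset.sum_add_distrib] at htot
  rw [← hsym, hdiag] at htot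
  rw [Nat.choose_two_right]
  have h2 : S.card * (S.card - 1) + S.card = S.card * S.card := by
    cases' S.card with k
    · simp
    · simp only [Nat.succ_sub_one]; ring
  generalize hgen : S.card * (S.card - 1) = t at h2
  omega

private lemma tri5 {n : ℕ} (i j k : Fin n) :
    (if i < j then (1:ℕ) else 0) =
      (if k < i ∧ i < j then (1:ℕ) else 0) + (if i < k ∧ k < j then 1 else 0)
      + (if i < j ∧ j < k then 1 else 0)
      + (if k = i ∧ i < j then 1 else 0) + (if k = j ∧ i < j then 1 else 0) := by
  simp only [Fin.lt_def, Fin.ext_iff]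
  split_ifs <;> omega

private lemma triples_nat {n : ℕ} (S : Finset (Fin n)) :
    (∑ i ∈ S, ∑ j ∈ S, ∑ k ∈ S, if i < j ∧ j < k then (1:ℕ) else 0) = S.card.choose 3 := by
  have expand : (∑ k ∈ S, ∑ i ∈ S, ∑ j ∈ S, if i < j then (1:ℕ) else 0)
      = S.card * (∑ i ∈ S, ∑ j ∈ S, if i < j then (1:ℕ) else 0) := by
    rw [Finset.sum_const, smul_eq_mul]
  have split : (∑ k ∈ S, ∑ i ∈ S, ∑ j ∈ S, if i < j then (1:ℕ) else 0)
      = (∑ k ∈ S, ∑ i ∈ S, ∑ j ∈ S, ((if k < i ∧ i < j then (1:ℕ) else 0)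
        + (if i < k ∧ k < j then 1 else 0) + (if i < j ∧ j < k then 1 else 0)
        + (if k = i ∧ i < j then 1 else 0) + (if k = j ∧ i < j then 1 else 0))) :=
    Finset.sum_congr rfl fun k _ => Finset.sum_congr rfl fun i _ =>
      Finset.sum_congr rfl fun j _ => tri5 i j k
  simp only [Finset.sum_add_distrib] at split
  have p1 : (∑ k ∈ S, ∑ i ∈ S, ∑ j ∈ S, if k < i ∧ i < j then (1:ℕ) else 0)
      = ∑ i ∈ S, ∑ j ∈ S, ∑ k ∈ S, if i < j ∧ j < k then (1:ℕ) else 0 := rfl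
  have p2 : (∑ k ∈ S, ∑ i ∈ S, ∑ j ∈ S, if i < k ∧ k < j then (1:ℕ) else 0)
      = ∑ i ∈ S, ∑ j ∈ S, ∑ k ∈ S, if i < j ∧ j < k then (1:ℕ) else 0 := Finset.sum_comm
  have p3 : (∑ k ∈ S, ∑ i ∈ S, ∑ j ∈ S, if i < j ∧ j < k then (1:ℕ) else 0)
      = ∑ i ∈ S, ∑ j ∈ S, ∑ k ∈ S, if i < j ∧ j < k then (1:ℕ) else 0 := by
    rw [Finset.sum_comm]
    exact Finset.sum_congr rfl fun i _ => Finset.sum_comm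
  have p4 : (∑ k ∈ S, ∑ i ∈ S, ∑ j ∈ S, if k = i ∧ i < j then (1:ℕ) else 0)
      = ∑ i ∈ S, ∑ j ∈ S, if i < j then (1:ℕ) else 0 := by
    rw [Finset.sum_comm]
    refine Finset.sum_congr rfl fun i hi => ?_
    rw [Finset.sum_comm]
    refine Finset.sum_congr rfl fun j hj => ?_
    simp only [ite_and]
    rw [Finset.sum_ite_eq' S i (fun _ => if i < j then (1:ℕ) else 0)]
    simp [hi]
  have p5 : (∑ k ∈ S, ∑ i ∈ S, ∑ j ∈ S, if k = j ∧ i < j then (1:ℕ) else 0)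
      = ∑ i ∈ S, ∑ j ∈ S, if i < j then (1:ℕ) else 0 := by
    rw [Finset.sum_comm]
    refine Finset.sum_congr rfl fun i hi => ?_
    rw [Finset.sum_comm]
    refine Finset.sum_congr rfl fun j hj => ?_
    simp only [ite_and]
    rw [Finset.sum_ite_eq' S j (fun _ => if i < j then (1:ℕ) else 0)]
    simp [hj]
  rw [p1, p2, p3, p4, p5, pairs_nat] at split
  rw [Finset.sum_const, smul_eq_mul] at split
  -- split : card * choose 2 = T + T + T + choose2 + choose2
  have hch : S.card.choose 3 * 3 = S.card.choose 2 * (S.card - 2) :=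
    Nat.choose_succ_right_eq S.card 2
  rcases le_or_gt 2 S.card with h | h
  · have hmul : S.card * S.card.choose 2
        = (S.card - 2) * S.card.choose 2 + 2 * S.card.choose 2 := by
      have h2 : S.card - 2 + 2 = S.card := by omega
      calc S.card * S.card.choose 2 = (S.card - 2 + 2) * S.card.choose 2 := by rw [h2]
        _ = _ := by ring
    rw [mul_comm (S.card.choose 2) (S.card - 2)] at hch
    generalize hg : (S.card - 2) * S.card.choose 2 = v at hmul hch
    generalize hg2 : S.card * S.card.choose 2 = w at hmul split
    omega
  · have h0 : S.card.choose 2 = 0 := Nat.choose_eq_zero_of_lt (by omega)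
    have h3 : S.card.choose 3 = 0 := Nat.choose_eq_zero_of_lt (by omega)
    rw [h3]
    rw [h0] at split
    omega

private lemma key (m : ℕ) :
    ((m.choose 2 : ZMod 2) = if m % 4 = 0 ∨ m % 4 = 1 then 0 else 1) ∧
    ((m.choose 3 : ZMod 2) + (m.choose 2 : ZMod 2) + (m : ZMod 2)
      = if m % 4 = 0 then 0 else 1) := by
  induction m with
  | zero => constructor <;> norm_num
  | succ k ih =>
    obtain ⟨ih2, ih3⟩ := ih
    have h2 : (k+1).choose 2 = k + k.choose 2 := by
      rw [Nat.choose_succ_succ k 1, Nat.choose_one_right]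
    have h3 : (k+1).choose 3 = k.choose 2 + k.choose 3 := Nat.choose_succ_succ k 2
    have hkm : ((k % 2 : ℕ) : ZMod 2) = (k : ZMod 2) := ZMod.natCast_mod k 2
    have hr : k % 4 = 0 ∨ k % 4 = 1 ∨ k % 4 = 2 ∨ k % 4 = 3 := by omega
    rw [h2, h3]
    push_cast
    rcases hr with h | h | h | h
    · have hs : (k+1) % 4 = 1 := by omega
      have hk1 : k % 2 = 0 := by omega
      have ek : (k : ZMod 2) = 0 := by rw [← hkm, hk1]; norm_num
      have e2 : ((k.choose 2 : ℕ) : ZMod 2) = 0 := by rw [ih2]; simp [h]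
      rw [ek, e2] at ih3
      have e3 : ((k.choose 3 : ℕ) : ZMod 2) = 0 := by
        rw [h] at ih3; simpa using ih3
      rw [ek, e2, e3, hs]
      constructor <;> norm_num
    · have hs : (k+1) % 4 = 2 := by omega
      have hk1 : k % 2 = 1 := by omega
      have ek : (k : ZMod 2) = 1 := by rw [← hkm, hk1]; norm_num
      have e2 : ((k.choose 2 : ℕ) : ZMod 2) = 0 := by rw [ih2]; simp [h]
      rw [ek, e2] at ih3
      have e3 : ((k.choose 3 : ℕ) : ZMod 2) = 0 := by
        rw [h] at ih3
        norm_num at ih3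
        linear_combination ih3
      rw [ek, e2, e3, hs]
      constructor <;> norm_num <;> decide
    · have hs : (k+1) % 4 = 3 := by omega
      have hk1 : k % 2 = 0 := by omega
      have ek : (k : ZMod 2) = 0 := by rw [← hkm, hk1]; norm_num
      have e2 : ((k.choose 2 : ℕ) : ZMod 2) = 1 := by rw [ih2]; simp [h]
      rw [ek, e2] at ih3
      have e3 : ((k.choose 3 : ℕ) : ZMod 2) = 0 := by
        rw [h] at ih3
        norm_num at ih3
        linear_combination ih3
      rw [ek, e2, e3, hs]
      constructor <;> norm_num <;> decide
    · have hs : (k+1) % 4 = 0 := by omega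
      have hk1 : k % 2 = 1 := by omega
      have ek : (k : ZMod 2) = 1 := by rw [← hkm, hk1]; norm_num
      have e2 : ((k.choose 2 : ℕ) : ZMod 2) = 1 := by rw [ih2]; simp [h]
      rw [ek, e2] at ih3
      have e3 : ((k.choose 3 : ℕ) : ZMod 2) = 1 := by
        rw [h] at ih3
        norm_num at ih3
        have h20 : (2 : ZMod 2) = 0 := by decide
        linear_combination ih3 - h20
      rw [ek, e2, e3, hs]
      constructor <;> norm_num <;> decide

private lemma sum_indicator {M : Type*} [AddCommMonoid M] {n : ℕ} (S : Finset (Fin n))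
    (f : Fin n → M) : (∑ i : Fin n, if i ∈ S then f i else 0) = ∑ i ∈ S, f i := by
  rw [Finset.sum_ite_mem, Finset.univ_inter]

/-- The value `α_{p,q}(x)` depends only on the Hamming weight `a` of the first `p`
coordinates and the weight `b` of the last `q` coordinates:
`α_{p,q}(x) = [a+b ≢ 0 mod 4] + a mod 2` in `Z_2`. -/
theorem stmt_18 (p q : ℕ) (x : Fin (p + q) → ZMod 2)
    (a b : ℕ)
    (ha : a = (Finset.univ.filter (fun i : Fin (p + q) => (i : ℕ) < p ∧ x i ≠ 0)).card)
    (hb : b = (Finset.univ.filter (fun i : Fin (p + q) => p ≤ (i : ℕ) ∧ x i ≠ 0)).card) :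
    alphaF p (p + q) x = (if (a + b) % 4 = 0 then 0 else 1) + (a : ZMod 2) := by
  classical
  set S : Finset (Fin (p + q)) := univ.filter (fun i => x i ≠ 0) with hS
  have hx1 : ∀ i, i ∈ S → x i = 1 := by
    intro i hi
    have hne : x i ≠ 0 := (Finset.mem_filter.mp hi).2
    revert hne
    generalize x i = c
    revert c
    decide
  have hx0 : ∀ i, i ∉ S → x i = 0 := by
    intro i hi
    by_contra h
    exact hi (Finset.mem_filter.mpr ⟨Finset.mem_univ _, h⟩)
  have ha' : a = (S.filter (fun i : Fin (p + q) => (i : ℕ) < p)).card := by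
    rw [ha, hS, Finset.filter_filter]
    congr 1
    ext i
    simp [and_comm]
  have hab : a + b = S.card := by
    have hb' : b = (S.filter (fun i : Fin (p + q) => ¬ (i : ℕ) < p)).card := by
      rw [hb, hS, Finset.filter_filter]
      congr 1
      ext i
      simp [not_lt, and_comm]
    rw [ha', hb', Finset.card_filter_add_card_filter_not]
  -- the linear sum
  have e1 : (∑ i, x i) = (S.card : ZMod 2) := by
    have h : (∑ i, x i) = ∑ i : Fin (p+q), if i ∈ S then (1 : ZMod 2) else 0 :=
      Finset.sum_congr rfl fun i _ => by
        by_cases hi : i ∈ S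
        · simp [hi, hx1 i hi]
        · simp [hi, hx0 i hi]
    rw [h, sum_indicator, Finset.sum_const, nsmul_eq_mul, mul_one]
  -- the p-truncated sum
  have e4 : (∑ i : Fin (p + q), if (i : ℕ) < p then x i else 0) = (a : ZMod 2) := by
    have h : (∑ i : Fin (p + q), if (i : ℕ) < p then x i else 0)
        = ∑ i : Fin (p+q), if i ∈ S then (if (i : ℕ) < p then (1 : ZMod 2) else 0) else 0 :=
      Finset.sum_congr rfl fun i _ => by
        by_cases hi : i ∈ S
        · simp [hi, hx1 i hi]
        · simp [hi, hx0 i hi]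
    rw [h, sum_indicator, Finset.sum_boole, ha']
  -- the quadratic sum
  have e2 : (∑ i, ∑ j, if i < j then x i * x j else 0)
      = ((∑ i ∈ S, ∑ j ∈ S, if i < j then (1 : ℕ) else 0 : ℕ) : ZMod 2) := by
    have h : (∑ i, ∑ j, if i < j then x i * x j else 0)
        = ∑ i : Fin (p+q), if i ∈ S then
            (∑ j : Fin (p+q), if j ∈ S then (if i < j then (1 : ZMod 2) else 0) else 0) else 0 := by
      refine Finset.sum_congr rfl fun i _ => ?_
      by_cases hi : i ∈ S
      · simp only [hi, if_true]
        refine Finset.sum_congr rfl fun j _ => ?_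
        by_cases hj : j ∈ S
        · simp [hj, hx1 i hi, hx1 j hj]
        · simp [hj, hx0 j hj]
      · simp [hi, hx0 i hi]
    rw [h, sum_indicator]
    rw [Nat.cast_sum]
    refine Finset.sum_congr rfl fun i _ => ?_
    rw [sum_indicator, Nat.cast_sum]
    refine Finset.sum_congr rfl fun j _ => ?_
    split_ifs <;> simp
  -- the cubic sum
  have e3 : (∑ i, ∑ j, ∑ k, if i < j ∧ j < k then x i * x j * x k else 0)
      = ((∑ i ∈ S, ∑ j ∈ S, ∑ k ∈ S, if i < j ∧ j < k then (1 : ℕ) else 0 : ℕ) : ZMod 2) := by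
    have h : (∑ i, ∑ j, ∑ k, if i < j ∧ j < k then x i * x j * x k else 0)
        = ∑ i : Fin (p+q), if i ∈ S then
            (∑ j : Fin (p+q), if j ∈ S then
              (∑ k : Fin (p+q), if k ∈ S then
                (if i < j ∧ j < k then (1 : ZMod 2) else 0) else 0) else 0) else 0 := by
      refine Finset.sum_congr rfl fun i _ => ?_
      by_cases hi : i ∈ S
      · simp only [hi, if_true]
        refine Finset.sum_congr rfl fun j _ => ?_
        by_cases hj : j ∈ S
        · simp only [hj, if_true]
          refine Finset.sum_congr rfl fun k _ => ?_
          by_cases hk : k ∈ S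
          · simp [hk, hx1 i hi, hx1 j hj, hx1 k hk]
          · simp [hk, hx0 k hk]
        · simp [hj, hx0 j hj]
      · simp [hi, hx0 i hi]
    rw [h, sum_indicator, Nat.cast_sum]
    refine Finset.sum_congr rfl fun i _ => ?_
    rw [sum_indicator, Nat.cast_sum]
    refine Finset.sum_congr rfl fun j _ => ?_
    rw [sum_indicator, Nat.cast_sum]
    refine Finset.sum_congr rfl fun k _ => ?_
    split_ifs <;> simp
  rw [alphaF, e1, e2, e3, e4, pairs_nat, triples_nat, hab]
  have hk := (key S.card).2
  rw [hk]
end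

section
/- For every n ≥ 5, the values s(n,0), s(0,n), and s(p,q) for any p,q ≥ 1 with p+q = n, satisfy s(n,0) < s(p,q) < s(0,n). -/
open Finset

namespace Stmt19Aux

def Pr {n : ℕ} (x : Fin n → ZMod 2) : ZMod 2 :=
  ∑ i : Fin n, ∑ j : Fin n, if i < j then x i * x j else 0

def Tr {n : ℕ} (x : Fin n → ZMod 2) : ZMod 2 :=
  ∑ i : Fin n, ∑ j : Fin n, ∑ k : Fin n, if i < j ∧ j < k then x i * x j * x k else 0

lemma Pr_succ {n : ℕ} (x : Fin (n + 1) → ZMod 2) :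
    Pr x = x 0 * (∑ i : Fin n, x i.succ) + Pr (fun i => x i.succ) := by
  unfold Pr
  simp only [Fin.sum_univ_succ, lt_self_iff_false, if_false, Fin.not_lt_zero,
    Fin.succ_lt_succ_iff, Fin.succ_pos, if_true, zero_add, Finset.mul_sum]

lemma Tr_succ {n : ℕ} (x : Fin (n + 1) → ZMod 2) :
    Tr x = x 0 * Pr (fun i => x i.succ) + Tr (fun i => x i.succ) := by
  unfold Tr Pr
  simp only [Fin.sum_univ_succ, lt_self_iff_false, false_and, and_false, if_false,
    Fin.not_lt_zero, Fin.succ_lt_succ_iff, Fin.succ_pos, true_and, if_true, zero_add,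
    Finset.mul_sum, Finset.sum_const_zero, mul_ite, mul_zero, mul_assoc]

def Wn {n : ℕ} (x : Fin n → ZMod 2) : ℕ := ∑ i : Fin n, if x i = 1 then 1 else 0
def Tn {n : ℕ} (p : ℕ) (x : Fin n → ZMod 2) : ℕ :=
  ∑ i : Fin n, if (i : ℕ) < p ∧ x i = 1 then 1 else 0

lemma zmod_cases (v : ZMod 2) : v = 0 ∨ v = 1 := by revert v; decide

lemma Wn_succ {n : ℕ} (x : Fin (n + 1) → ZMod 2) :
    Wn x = (if x 0 = 1 then 1 else 0) + Wn (fun i => x i.succ) := by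
  simp only [Wn, Fin.sum_univ_succ]

lemma Tn_succ {n : ℕ} (p : ℕ) (x : Fin (n + 1) → ZMod 2) :
    Tn p x = (if 0 < p ∧ x 0 = 1 then 1 else 0) + Tn (p - 1) (fun i => x i.succ) := by
  simp only [Tn, Fin.sum_univ_succ, Fin.val_zero, Fin.val_succ]
  congr 1
  refine Finset.sum_congr rfl fun i _ => ?_
  exact if_congr (and_congr_left' (by omega)) rfl rfl

lemma lin_eq {n : ℕ} (x : Fin n → ZMod 2) : (∑ i, x i) = (Wn x : ZMod 2) := by
  rw [Wn, Nat.cast_sum]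
  refine Finset.sum_congr rfl fun i _ => ?_
  rcases zmod_cases (x i) with h | h <;> simp [h]

lemma tpart_eq {n : ℕ} (p : ℕ) (x : Fin n → ZMod 2) :
    (∑ i : Fin n, if (i : ℕ) < p then x i else 0) = (Tn p x : ZMod 2) := by
  rw [Tn, Nat.cast_sum]
  refine Finset.sum_congr rfl fun i _ => ?_
  rcases zmod_cases (x i) with h | h <;> by_cases hi : (i : ℕ) < p <;> simp [h, hi]

lemma Pr_eq : ∀ {n : ℕ} (x : Fin n → ZMod 2), Pr x = ((Wn x).choose 2 : ZMod 2) := by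
  intro n
  induction n with
  | zero => intro x; simp [Pr, Wn]
  | succ n ih =>
    intro x
    rw [Pr_succ, ih, lin_eq]
    rcases zmod_cases (x 0) with h | h
    · rw [Wn_succ, if_neg (by simp [h]), zero_add, h, zero_mul, zero_add]
    · have hW : Wn x = (Wn fun i : Fin n => x i.succ) + 1 := by
        rw [Wn_succ, if_pos h, add_comm]
      rw [hW, Nat.choose_succ_succ _ 1, Nat.choose_one_right, h, one_mul]
      push_cast
      ring

lemma Tr_eq : ∀ {n : ℕ} (x : Fin n → ZMod 2), Tr x = ((Wn x).choose 3 : ZMod 2) := by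
  intro n
  induction n with
  | zero => intro x; simp [Tr, Wn]
  | succ n ih =>
    intro x
    rw [Tr_succ, ih, Pr_eq]
    rcases zmod_cases (x 0) with h | h
    · rw [Wn_succ, if_neg (by simp [h]), zero_add, h, zero_mul, zero_add]
    · have hW : Wn x = (Wn fun i : Fin n => x i.succ) + 1 := by
        rw [Wn_succ, if_pos h, add_comm]
      rw [hW, Nat.choose_succ_succ _ 2, h, one_mul]
      push_cast
      ring

lemma alpha_eq {n : ℕ} (p : ℕ) (x : Fin n → ZMod 2) :
    alphaF p n x = (((Wn x).choose 3 + (Wn x).choose 2 + Wn x + Tn p x : ℕ) : ZMod 2) := by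
  show Tr x + Pr x + (∑ i, x i) + (∑ i : Fin n, if (i : ℕ) < p then x i else 0) = _
  rw [Tr_eq, Pr_eq, lin_eq, tpart_eq]
  push_cast
  ring

/-- the sign character on `ZMod 2`, valued in the Gaussian integers -/
def sgn (v : ZMod 2) : GaussianInt := if v = 1 then -1 else 1

lemma sgn_add (a b : ZMod 2) : sgn (a + b) = sgn a * sgn b := by
  rcases zmod_cases a with rfl | rfl <;> rcases zmod_cases b with rfl | rfl <;> decide

lemma sgn_nat (m : ℕ) : sgn ((m : ZMod 2)) = (-1) ^ m := by
  induction m with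
  | zero => decide
  | succ m ih =>
    have h : ((m + 1 : ℕ) : ZMod 2) = (m : ZMod 2) + 1 := by push_cast; ring
    rw [h, sgn_add, ih, pow_succ]
    norm_num [sgn]

local notation "gi" => (Zsqrtd.sqrtd : GaussianInt)

lemma gi_pow_four : gi ^ 4 = 1 := by decide

lemma neg_gi_pow_four : (-gi) ^ 4 = 1 := by decide

lemma c2step (w : ℕ) : (w + 1).choose 2 = w.choose 2 + w := by
  rw [Nat.choose_succ_succ w 1, Nat.choose_one_right, add_comm]

lemma c3step (w : ℕ) : (w + 1).choose 3 = w.choose 3 + w.choose 2 := by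
  rw [Nat.choose_succ_succ w 2, add_comm]

lemma d2 (w : ℕ) : (w + 4).choose 2 = w.choose 2 + 2 * (2 * w + 3) := by
  have a0 := c2step w
  have a1 : (w + 2).choose 2 = (w + 1).choose 2 + (w + 1) := c2step (w + 1)
  have a2 : (w + 3).choose 2 = (w + 2).choose 2 + (w + 2) := c2step (w + 2)
  have a3 : (w + 4).choose 2 = (w + 3).choose 2 + (w + 3) := c2step (w + 3)
  omega

lemma d3 (w : ℕ) : (w + 4).choose 3 = w.choose 3 + 2 * (2 * w.choose 2 + 3 * w + 2) := by
  have a0 := c3step w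
  have a1 : (w + 2).choose 3 = (w + 1).choose 3 + (w + 1).choose 2 := c3step (w + 1)
  have a2 : (w + 3).choose 3 = (w + 2).choose 3 + (w + 2).choose 2 := c3step (w + 2)
  have a3 : (w + 4).choose 3 = (w + 3).choose 3 + (w + 3).choose 2 := c3step (w + 3)
  have b1 := c2step w
  have b2 : (w + 2).choose 2 = (w + 1).choose 2 + (w + 1) := c2step (w + 1)
  have b3 : (w + 3).choose 2 = (w + 2).choose 2 + (w + 2) := c2step (w + 2)
  omega

lemma negpow_even (a m : ℕ) : (-1 : GaussianInt) ^ (a + 2 * m) = (-1) ^ a := by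
  rw [pow_add, pow_mul, neg_one_sq, one_pow, mul_one]

lemma pow_shift {z : GaussianInt} (hz : z ^ 4 = 1) (u : ℕ) : z ^ (u + 4) = z ^ u := by
  rw [pow_add, hz, mul_one]

lemma key2 : ∀ w : ℕ, (2 : GaussianInt) * (-1) ^ (w.choose 3) * (-1) ^ (w.choose 2) * (-1) ^ w
    = -1 + gi ^ w + (-1) ^ w + (-gi) ^ w := by
  intro w
  induction w using Nat.strong_induction_on with
  | _ w ih =>
    rcases lt_or_ge w 4 with hw | hw
    · interval_cases w <;> decide
    · obtain ⟨u, rfl⟩ : ∃ u, w = u + 4 := ⟨w - 4, by omega⟩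
      have hu := ih u (by omega)
      rw [d3, d2, negpow_even, negpow_even, pow_shift gi_pow_four,
        pow_shift neg_gi_pow_four, pow_shift (by decide : (-1 : GaussianInt) ^ 4 = 1)]
      exact hu

lemma key_arith (w t : ℕ) :
    (2 : GaussianInt) * sgn ((w.choose 3 + w.choose 2 + w + t : ℕ) : ZMod 2)
      = (-1) ^ t * (-1 + gi ^ w + (-1) ^ w + (-gi) ^ w) := by
  have hc : ((w.choose 3 + w.choose 2 + w + t : ℕ) : ZMod 2)
      = ((w.choose 3 : ℕ) : ZMod 2) + ((w.choose 2 : ℕ) : ZMod 2)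
        + ((w : ℕ) : ZMod 2) + ((t : ℕ) : ZMod 2) := by push_cast; ring
  rw [hc, sgn_add, sgn_add, sgn_add, sgn_nat, sgn_nat, sgn_nat, sgn_nat]
  linear_combination ((-1 : GaussianInt) ^ t) * key2 w

lemma zmod_sum (g : ZMod 2 → GaussianInt) : ∑ v, g v = g 0 + g 1 :=
  Fin.sum_univ_two g

/-- The generating sum. -/
lemma gen_sum (z : GaussianInt) :
    ∀ (n p : ℕ), (∑ x : Fin n → ZMod 2, (-1) ^ (Tn p x) * z ^ (Wn x))
      = (1 - z) ^ (min p n) * (1 + z) ^ (n - p) := by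
  intro n
  induction n with
  | zero =>
    intro p
    simp [Tn, Wn]
  | succ n ih =>
    intro p
    have hsplit : (∑ x : Fin (n + 1) → ZMod 2, (-1 : GaussianInt) ^ (Tn p x) * z ^ (Wn x))
        = ∑ vy : ZMod 2 × (Fin n → ZMod 2),
            (-1) ^ (Tn p (Fin.cons vy.1 vy.2)) * z ^ (Wn (Fin.cons vy.1 vy.2)) := by
      rw [← (Fin.consEquiv (fun _ : Fin (n + 1) => ZMod 2)).sum_comp
        (fun x : Fin (n + 1) → ZMod 2 => (-1 : GaussianInt) ^ (Tn p x) * z ^ (Wn x))]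
      rfl
    have hcons : ∀ (v : ZMod 2) (y : Fin n → ZMod 2),
        (-1 : GaussianInt) ^ (Tn p (Fin.cons v y)) * z ^ (Wn (Fin.cons v y))
          = ((if 0 < p ∧ v = 1 then -1 else 1) * (if v = 1 then z else 1))
            * ((-1) ^ (Tn (p - 1) y) * z ^ (Wn y)) := by
      intro v y
      have hx0 : (Fin.cons v y : Fin (n + 1) → ZMod 2) 0 = v := rfl
      have hxs : (fun i : Fin n => (Fin.cons v y : Fin (n + 1) → ZMod 2) i.succ) = y := by
        funext i; simp
      rw [Tn_succ p (Fin.cons v y), Wn_succ (Fin.cons v y), hx0, hxs, pow_add, pow_add]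
      by_cases hv : v = 1 <;> by_cases hp0 : 0 < p <;> simp [hv, hp0] <;> ring
    rw [hsplit, Fintype.sum_prod_type]
    have hinner : ∀ v : ZMod 2,
        (∑ y : Fin n → ZMod 2,
          (-1 : GaussianInt) ^ (Tn p (Fin.cons v y)) * z ^ (Wn (Fin.cons v y)))
        = ((if 0 < p ∧ v = 1 then -1 else 1) * (if v = 1 then z else 1))
          * ((1 - z) ^ (min (p - 1) n) * (1 + z) ^ (n - (p - 1))) := by
      intro v
      rw [← ih (p - 1), Finset.mul_sum]
      exact Finset.sum_congr rfl fun y _ => hcons v y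
    rw [zmod_sum (fun v => ∑ y : Fin n → ZMod 2,
      (-1 : GaussianInt) ^ (Tn p (Fin.cons v y)) * z ^ (Wn (Fin.cons v y))),
      hinner 0, hinner 1]
    have h01 : ¬((0 : ZMod 2) = 1) := by decide
    rcases Nat.eq_zero_or_pos p with hp0 | hp0
    · subst hp0
      have e1 : min 0 (n + 1) = 0 := by omega
      have e2 : n + 1 - 0 = (n - 0) + 1 := by omega
      have e3 : min (0 - 1) n = 0 := by omega
      have e4 : n - (0 - 1) = n - 0 := by omega
      rw [e1, e2, e3, e4]
      simp only [lt_self_iff_false, false_and, if_false, if_neg h01, if_pos rfl,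
        if_true, ite_true]
      ring
    · have e1 : min p (n + 1) = min (p - 1) n + 1 := by omega
      have e2 : n + 1 - p = n - (p - 1) := by omega
      rw [e1, e2]
      have hc0 : ¬(0 < p ∧ (0 : ZMod 2) = 1) := by simp [h01]
      have hc1 : (0 < p ∧ (1 : ZMod 2) = 1) := ⟨hp0, rfl⟩
      rw [if_neg hc0, if_neg h01, if_pos hc1, if_pos rfl]
      ring

lemma card_fun_zmod (n : ℕ) : Fintype.card (Fin n → ZMod 2) = 2 ^ n := by
  simp [Fintype.card_fun]

lemma Fsum_eq (p q : ℕ) :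
    (∑ x : Fin (p + q) → ZMod 2, sgn (alphaF p (p + q) x))
      = (2 : GaussianInt) ^ (p + q) - 2 * (statS p q : GaussianInt) := by
  have hsgn : ∀ v : ZMod 2, sgn v = 1 - 2 * (if v = 1 then 1 else 0) := by
    intro v; rcases zmod_cases v with rfl | rfl <;> decide
  simp only [hsgn]
  rw [Finset.sum_sub_distrib, ← Finset.mul_sum, Finset.sum_boole, Finset.sum_const,
    Finset.card_univ, card_fun_zmod, statS]
  push_cast
  ring

lemma master (p q : ℕ) :
    4 * (statS p q : GaussianInt)
      = 2 ^ (p + q + 1) + 0 ^ p * 2 ^ q - 2 ^ p * 0 ^ q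
        - (1 - gi) ^ p * (1 + gi) ^ q - (1 + gi) ^ p * (1 - gi) ^ q := by
  have hmin : min p (p + q) = p := Nat.min_eq_left (Nat.le_add_right p q)
  have hsub : p + q - p = q := by omega
  have h1 : (2 : GaussianInt) * (∑ x : Fin (p + q) → ZMod 2, sgn (alphaF p (p + q) x))
      = -((∑ x : Fin (p + q) → ZMod 2, (-1 : GaussianInt) ^ (Tn p x) * (1 : GaussianInt) ^ (Wn x)))
        + (∑ x : Fin (p + q) → ZMod 2, (-1 : GaussianInt) ^ (Tn p x) * gi ^ (Wn x))
        + (∑ x : Fin (p + q) → ZMod 2, (-1 : GaussianInt) ^ (Tn p x) * (-1 : GaussianInt) ^ (Wn x))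
        + (∑ x : Fin (p + q) → ZMod 2, (-1 : GaussianInt) ^ (Tn p x) * (-gi) ^ (Wn x)) := by
    rw [Finset.mul_sum, ← Finset.sum_neg_distrib, ← Finset.sum_add_distrib,
      ← Finset.sum_add_distrib, ← Finset.sum_add_distrib]
    refine Finset.sum_congr rfl fun x _ => ?_
    rw [alpha_eq p x, key_arith (Wn x) (Tn p x), one_pow]
    ring
  rw [gen_sum 1 (p + q) p, gen_sum gi (p + q) p, gen_sum (-1) (p + q) p,
    gen_sum (-gi) (p + q) p, hmin, hsub, Fsum_eq p q] at h1
  have h2 : (1 - 1 : GaussianInt) = 0 := by ring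
  have h3 : (1 + 1 : GaussianInt) = 2 := by ring
  have h4 : (1 - (-1) : GaussianInt) = 2 := by ring
  have h5 : (1 + (-1) : GaussianInt) = 0 := by ring
  have h6 : (1 - -gi : GaussianInt) = 1 + gi := by ring
  have h7 : (1 + -gi : GaussianInt) = 1 - gi := by ring
  rw [h2, h3, h4, h5, h6, h7] at h1
  have h8 : (2 : GaussianInt) ^ (p + q + 1) = 2 * 2 ^ (p + q) := by ring
  rw [h8]
  linear_combination -h1

lemma star_one_sub : star (1 - gi) = 1 + gi := by decide

lemma star_one_add : star (1 + gi) = 1 - gi := by decide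

lemma add_star (z : GaussianInt) : z + star z = 2 * ((z.re : ℤ) : GaussianInt) := by
  ext <;> simp [Zsqrtd.re_star, Zsqrtd.im_star, Zsqrtd.re_mul, Zsqrtd.im_mul] <;> ring

lemma master_int (p q : ℕ) :
    4 * (statS p q : ℤ)
      = 2 ^ (p + q + 1) + 0 ^ p * 2 ^ q - 2 ^ p * 0 ^ q
        - 2 * ((1 - gi) ^ p * (1 + gi) ^ q).re := by
  have h := master p q
  have hstar : (1 + gi) ^ p * (1 - gi) ^ q = star ((1 - gi) ^ p * (1 + gi) ^ q) := by
    rw [star_mul', star_pow, star_pow, star_one_sub, star_one_add, mul_comm]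
  rw [hstar] at h
  have hz := add_star ((1 - gi) ^ p * (1 + gi) ^ q)
  have key : ((4 * (statS p q : ℤ) : ℤ) : GaussianInt)
      = ((2 ^ (p + q + 1) + 0 ^ p * 2 ^ q - 2 ^ p * 0 ^ q
          - 2 * ((1 - gi) ^ p * (1 + gi) ^ q).re : ℤ) : GaussianInt) := by
    push_cast
    linear_combination h - hz
  exact_mod_cast key

lemma norm_pow' (w : GaussianInt) (k : ℕ) : Zsqrtd.norm (w ^ k) = (Zsqrtd.norm w) ^ k := by
  induction k with
  | zero => simp [Zsqrtd.norm_one]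
  | succ k ih => rw [pow_succ, pow_succ, Zsqrtd.norm_mul, ih]

lemma norm_one_sub : Zsqrtd.norm (1 - gi) = 2 := by decide

lemma norm_one_add : Zsqrtd.norm (1 + gi) = 2 := by decide

lemma re_sq_le (p q : ℕ) : (((1 - gi) ^ p * (1 + gi) ^ q).re) ^ 2 ≤ 2 ^ (p + q) := by
  have hn : Zsqrtd.norm ((1 - gi) ^ p * (1 + gi) ^ q) = 2 ^ (p + q) := by
    rw [Zsqrtd.norm_mul, norm_pow', norm_pow', norm_one_sub, norm_one_add, ← pow_add]
  rw [← hn, Zsqrtd.norm_def]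
  nlinarith [sq_nonneg (((1 - gi) ^ p * (1 + gi) ^ q).im)]

lemma int_aux (a b M : ℤ) (ha : a ^ 2 ≤ M) (hb : b ^ 2 ≤ M) (hM : 32 ≤ M) :
    2 * b - 2 * a < M := by
  nlinarith [sq_nonneg (a - b), sq_nonneg (a + b)]

end Stmt19Aux

open Stmt19Aux in
/-- For every `n ≥ 5` and `p, q ≥ 1` with `p + q = n`:
`s(n,0) < s(p,q) < s(0,n)`. -/
theorem stmt_19 (n : ℕ) (hn : 5 ≤ n) (p q : ℕ) (hp : 1 ≤ p) (hq : 1 ≤ q)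
    (hpq : p + q = n) :
    statS n 0 < statS p q ∧ statS p q < statS 0 n := by
  subst hpq
  have e1 := master_int (p + q) 0
  have e2 := master_int p q
  have e3 := master_int 0 (p + q)
  have ha := re_sq_le (p + q) 0
  have hb := re_sq_le p q
  have hc := re_sq_le 0 (p + q)
  have hp0 : p ≠ 0 := by omega
  have hq0 : q ≠ 0 := by omega
  have hn0 : p + q ≠ 0 := by omega
  simp only [Nat.add_zero] at e1 ha
  simp only [Nat.zero_add] at e3 hc
  simp only [zero_pow hn0, zero_pow hp0, zero_pow hq0, pow_zero, mul_one, one_mul,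
    zero_mul, mul_zero, add_zero, sub_zero] at e1 e2 e3 ha hb hc
  set a := (((1 - Zsqrtd.sqrtd : GaussianInt) ^ (p + q)).re) with ha_def
  set b := (((1 - Zsqrtd.sqrtd : GaussianInt) ^ p * (1 + Zsqrtd.sqrtd) ^ q).re) with hb_def
  set c := (((1 + Zsqrtd.sqrtd : GaussianInt) ^ (p + q)).re) with hc_def
  have hM : (32 : ℤ) ≤ 2 ^ (p + q) := by
    calc (32 : ℤ) = 2 ^ 5 := by norm_num
    _ ≤ 2 ^ (p + q) := pow_le_pow_right₀ (by norm_num) (by omega)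
  have h1 : 2 * b - 2 * a < 2 ^ (p + q) := int_aux a b _ ha hb hM
  have h2 : 2 * c - 2 * b < 2 ^ (p + q) := int_aux b c _ hb hc hM
  constructor
  · have h : (statS (p + q) 0 : ℤ) < statS p q := by linarith
    exact_mod_cast h
  · have h : (statS p q : ℤ) < statS 0 (p + q) := by linarith
    exact_mod_cast h
end
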